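/- Suppose the control set U(x) is finite for each state x ∈ S. If J* ≥ 0, then the iterates T̃^n(0) converge pointwise to J* as n → ∞. -/

import Mathlib

/-!
Common framework: countable-state/countable-control total-cost MDPs under the
General Convergence (GC) condition, following H. Yu, "On Convergence of Value
Iteration for a Class of Total Cost Markov Decision Processes".

States `S` and controls `C` are countable types; `U x` is the nonempty set of
feasible controls at `x`; `g x u ∈ (-∞, +∞]` is the one-stage cost (an `EReal`
that is never `⊥` on feasible pairs); `q x u x'` are transition probabilities.

A policy is represented by its conditional control distributions given the
(reversed) history of past (state, control) pairs and the current state.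
Expectations are computed by explicit countable sums, splitting every
extended-real quantity into its positive and negative parts (computed in
`ℝ≥0∞`) and recombining with the convention `∞ - ∞ = ∞`.
-/

open scoped ENNReal Classical
open Filter

noncomputable section

namespace GCMDP

/-- The positive part of an extended real, as an element of `ℝ≥0∞`. -/
def ePos (a : EReal) : ℝ≥0∞ := if a = ⊤ then ⊤ else ENNReal.ofReal a.toReal

/-- Recombine a positive part `P` and a negative part `N` into an extended real,
with the convention `∞ - ∞ = ∞`. -/
def signedSum (P N : ℝ≥0∞) : EReal := if P = ⊤ then ⊤ else (P : EReal) - (N : EReal)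

variable {S C : Type}

/-- A (randomized, history-dependent) policy: to each reversed list of past
(state, control) pairs and each current state it assigns a mass function on
controls. -/
def Policy (S C : Type) : Type := List (S × C) → S → C → ℝ≥0∞

/-- A policy is valid for the control constraint `U` if each of its conditional
distributions is a probability distribution concentrated on the feasible set. -/
def IsPolicy (U : S → Set C) (π : Policy S C) : Prop :=
  ∀ (h : List (S × C)) (x : S), (∑' u : C, π h x u) = 1 ∧ ∀ u : C, π h x u ≠ 0 → u ∈ U x

/-- A policy is nonrandomized if each of its conditional distributions is a
point mass. -/
def Nonrandomized (π : Policy S C) : Prop :=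
  ∀ (h : List (S × C)) (x : S), ∃ u : C, ∀ u' : C, π h x u' = if u' = u then 1 else 0

/-- The initial state recorded in a reversed history `h` with current state `x`. -/
def initOf (h : List (S × C)) (x : S) : S := ((h.getLast?).map Prod.fst).getD x

/-- A policy is semi-Markov if its decision at time `k` depends on the history
only through the time `k`, the initial state and the current state. -/
def IsSemiMarkov (π : Policy S C) : Prop :=
  ∀ (h h' : List (S × C)) (x : S), h.length = h'.length → initOf h x = initOf h' x →
    π h x = π h' x

/-- A policy is Markov if its decision at time `k` depends on the history only
through the time `k` and the current state. -/
def IsMarkov (π : Policy S C) : Prop :=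
  ∀ (h h' : List (S × C)) (x : S), h.length = h'.length → π h x = π h' x

/-- A policy is stationary if its decision depends only on the current state. -/
def IsStationary (π : Policy S C) : Prop :=
  ∀ (h h' : List (S × C)) (x : S), π h x = π h' x

/-- The stationary policy determined by a one-step decision rule `μ`. -/
def toPolicy (μ : S → C → ℝ≥0∞) : Policy S C := fun _ x u => μ x u

/-- Probability that, starting from `x₀` and following policy `π`, the first
transitions produce the reversed history `h` and current state `y`. -/
def histProb (q : S → C → S → ℝ≥0∞) (π : Policy S C) (x₀ : S) :
    List (S × C) → S → ℝ≥0∞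
  | [], y => if y = x₀ then 1 else 0
  | (z, u) :: h, y => histProb q π x₀ h z * π h z u * q z u y

/-- Marginal distribution of the state `x_n` at time `n` under policy `π`
started at `x₀`. -/
def sDist (q : S → C → S → ℝ≥0∞) (π : Policy S C) (x₀ : S) (n : ℕ) (y : S) : ℝ≥0∞ :=
  ∑' h : {l : List (S × C) // l.length = n}, histProb q π x₀ h.1 y

/-- Joint distribution of the state-control pair `(x_n, u_n)` at time `n`. -/
def saDist (q : S → C → S → ℝ≥0∞) (π : Policy S C) (x₀ : S) (n : ℕ) (y : S) (u : C) : ℝ≥0∞ :=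
  ∑' h : {l : List (S × C) // l.length = n}, histProb q π x₀ h.1 y * π h.1 y u

/-- Expectation `E^π_{x₀}[f(x_n, u_n)]` of a nonnegative cost. -/
def costAt (q : S → C → S → ℝ≥0∞) (π : Policy S C) (x₀ : S) (n : ℕ)
    (f : S → C → ℝ≥0∞) : ℝ≥0∞ :=
  ∑' y : S, ∑' u : C, saDist q π x₀ n y u * f y u

/-- Positive part `g₊` of the one-stage cost. -/
def gPos (g : S → C → EReal) (x : S) (u : C) : ℝ≥0∞ := ePos (g x u)

/-- Negative part `g₋` of the one-stage cost. -/
def gNeg (g : S → C → EReal) (x : S) (u : C) : ℝ≥0∞ := ePos (-(g x u))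

/-- `J_π^+(x) = E^π_x[∑_k g₊(x_k,u_k)]`. -/
def Jplus (q : S → C → S → ℝ≥0∞) (g : S → C → EReal) (π : Policy S C) (x : S) : ℝ≥0∞ :=
  ∑' n : ℕ, costAt q π x n (gPos g)

/-- `J_π^-(x) = E^π_x[∑_k g₋(x_k,u_k)]`. -/
def Jminus (q : S → C → S → ℝ≥0∞) (g : S → C → EReal) (π : Policy S C) (x : S) : ℝ≥0∞ :=
  ∑' n : ℕ, costAt q π x n (gNeg g)

/-- The total cost `J_π(x) = J_π^+(x) - J_π^-(x)` of a policy. -/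
def Jpol (q : S → C → S → ℝ≥0∞) (g : S → C → EReal) (π : Policy S C) (x : S) : EReal :=
  signedSum (Jplus q g π x) (Jminus q g π x)

/-- The general convergence (GC) condition: `sup_π J_π^-(x) < ∞` for all `x`. -/
def GC (U : S → Set C) (q : S → C → S → ℝ≥0∞) (g : S → C → EReal) : Prop :=
  ∀ x : S, (⨆ π ∈ {π' : Policy S C | IsPolicy U π'}, Jminus q g π x) ≠ ⊤

/-- The optimal cost function `J*(x) = inf_π J_π(x)`. -/
def Jstar (U : S → Set C) (q : S → C → S → ℝ≥0∞) (g : S → C → EReal) (x : S) : EReal :=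
  ⨅ π ∈ {π' : Policy S C | IsPolicy U π'}, Jpol q g π x

/-- `J^{*+}(x) = inf_π J_π^+(x)`. -/
def JstarPlus (U : S → Set C) (q : S → C → S → ℝ≥0∞) (g : S → C → EReal) (x : S) : ℝ≥0∞ :=
  ⨅ π ∈ {π' : Policy S C | IsPolicy U π'}, Jplus q g π x

/-- `J^{*-}(x) = inf_π J_π^-(x)`. -/
def JstarMinus (U : S → Set C) (q : S → C → S → ℝ≥0∞) (g : S → C → EReal) (x : S) : ℝ≥0∞ :=
  ⨅ π ∈ {π' : Policy S C | IsPolicy U π'}, Jminus q g π x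

/-- The general one-stage dynamic programming operator with one-stage cost `c`:
`(opT c J)(x) = inf_{u ∈ U(x)} { c(x,u) + ∑_{x'} J(x') q(x'|x,u) }`, where the
bracket is evaluated by separating positive and negative parts, with the
convention `∞ - ∞ = ∞`. -/
def opT (U : S → Set C) (q : S → C → S → ℝ≥0∞) (c : S → C → EReal)
    (J : S → EReal) (x : S) : EReal :=
  ⨅ u ∈ U x,
    signedSum (ePos (c x u) + ∑' x' : S, q x u x' * ePos (J x'))
      (ePos (-(c x u)) + ∑' x' : S, q x u x' * ePos (-(J x')))

/-- The dynamic programming operator `T` of the total cost problem. -/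
def Top (U : S → Set C) (q : S → C → S → ℝ≥0∞) (g : S → C → EReal) :
    (S → EReal) → S → EReal :=
  opT U q g

/-- The operator `T₊` associated with the positive part `g₊` of the cost. -/
def TopPlus (U : S → Set C) (q : S → C → S → ℝ≥0∞) (g : S → C → EReal) :
    (S → EReal) → S → EReal :=
  opT U q (fun x u => max (g x u) 0)

/-- The operator `T₋` associated with the (negated) negative part `-g₋` of the cost. -/
def TopMinus (U : S → Set C) (q : S → C → S → ℝ≥0∞) (g : S → C → EReal) :
    (S → EReal) → S → EReal :=
  opT U q (fun x u => min (g x u) 0)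

/-- The cost-free operator `T₀`. -/
def TopZero (U : S → Set C) (q : S → C → S → ℝ≥0∞) :
    (S → EReal) → S → EReal :=
  opT U q (fun _ _ => 0)

/-- The monotone-increasing modification `T̃(J) = max{J, T(J)}` of `T`. -/
def Ttil (U : S → Set C) (q : S → C → S → ℝ≥0∞) (g : S → C → EReal)
    (J : S → EReal) (x : S) : EReal :=
  max (J x) (Top U q g J x)

/-- The operator `T_μ` associated with a stationary decision rule `μ`. -/
def Tmu (q : S → C → S → ℝ≥0∞) (g : S → C → EReal) (μ : S → C → ℝ≥0∞)
    (J : S → EReal) (x : S) : EReal :=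
  signedSum (∑' u : C, μ x u * (ePos (g x u) + ∑' x' : S, q x u x' * ePos (J x')))
    (∑' u : C, μ x u * (ePos (-(g x u)) + ∑' x' : S, q x u x' * ePos (-(J x'))))

/-- Expectation `E^π_{x₀}[J(x_n)]` of an extended-real function of the state at
time `n` (positive and negative parts combined with the convention `∞-∞=∞`). -/
def expState (q : S → C → S → ℝ≥0∞) (π : Policy S C) (x₀ : S) (n : ℕ)
    (J : S → EReal) : EReal :=
  signedSum (∑' y : S, sDist q π x₀ n y * ePos (J y))
    (∑' y : S, sDist q π x₀ n y * ePos (-(J y)))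

/-- The expected tail cost `E^π_{x₀}[∑_{k ≥ n} g(x_k, u_k)]`. -/
def tailCost (q : S → C → S → ℝ≥0∞) (g : S → C → EReal) (π : Policy S C)
    (x₀ : S) (n : ℕ) : EReal :=
  signedSum (∑' k : ℕ, costAt q π x₀ (n + k) (gPos g))
    (∑' k : ℕ, costAt q π x₀ (n + k) (gNeg g))

/-- Membership in the class `A₀(S)`: functions nowhere `-∞` such that
`inf_{n ≥ 1} T₀ⁿ(min{J, 0})` is nowhere `-∞`. -/
def MemA0 (U : S → Set C) (q : S → C → S → ℝ≥0∞) (J : S → EReal) : Prop :=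
  (∀ x : S, J x ≠ ⊥) ∧
    ∀ x : S, (⨅ n : ℕ, (TopZero U q)^[n + 1] (fun y => min (J y) 0) x) ≠ ⊥

/-!
Write `Vₙ = T̃ⁿ(0)`, an increasing sequence. Since `J* ≥ 0`, the Bellman inequality `T J* ≤ J*`
holds: the cost of a policy is an average over its first control of costs that are each at least
the corresponding Q-factor of `J*`, so it is at least their infimum. Hence `Vₙ ≤ J*` for all `n`.

Conversely, let `V = sup Vₙ`. As `T Vₙ ≤ Vₙ₊₁ ≤ V` and `U(x)` is finite, one control `σ(x)`
attains the infimum defining `T Vₙ(x)` for infinitely many `n`; by monotone convergence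
`g(x, σ(x)) + E[V(x₁)] ≤ V(x)`. Iterating this along the stationary policy `σ` bounds its partial
costs by `V`, so `J* ≤ J_σ ≤ V`.
-/

lemma ePos_neg_of_nonneg {a : EReal} (h : 0 ≤ a) : ePos (-a) = 0 :=
  EReal.toENNReal_of_nonpos (EReal.neg_le_zero.2 h)

lemma ePos_mono {a b : EReal} (h : a ≤ b) : ePos a ≤ ePos b :=
  EReal.toENNReal_le_toENNReal h

lemma ePos_iSup {ι : Sort*} (f : ι → EReal) : ePos (⨆ i, f i) = ⨆ i, ePos (f i) :=
  Monotone.map_iSup_of_continuousAt EReal.continuous_toENNReal.continuousAt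
    (fun _ _ => EReal.toENNReal_le_toENNReal) EReal.toENNReal_bot

lemma signedSum_mono {P P' N N' : ℝ≥0∞} (hP : P ≤ P') (hN : N' ≤ N) :
    signedSum P N ≤ signedSum P' N' := by
  unfold signedSum
  split_ifs with h h'
  · exact le_rfl
  · exact absurd (top_le_iff.1 (h ▸ hP)) h'
  · exact le_top
  · exact EReal.sub_le_sub (by exact_mod_cast hP) (by exact_mod_cast hN)

lemma le_signedSum_iff {m : EReal} {P N : ℝ≥0∞} (hN : N ≠ ⊤) :
    m ≤ signedSum P N ↔ ePos m + N ≤ P + ePos (-m) := by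
  rcases eq_or_ne P ⊤ with rfl | hP
  · simp [signedSum]
  lift P to NNReal using hP
  lift N to NNReal using hN
  rw [signedSum, if_neg ENNReal.coe_ne_top, EReal.coe_nnreal_eq_coe_real,
    EReal.coe_nnreal_eq_coe_real, ← EReal.coe_sub]
  induction m using EReal.rec with
  | bot => simp [ePos]
  | top => exact iff_of_false (fun h => EReal.coe_ne_top _ (top_le_iff.1 h)) (by simp [ePos])
  | coe r =>
      rw [EReal.coe_le_coe_iff, ← EReal.coe_neg, ePos, ePos, if_neg (EReal.coe_ne_top _),
        if_neg (EReal.coe_ne_top _), EReal.toReal_coe, EReal.toReal_coe,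
        ← ENNReal.toReal_le_toReal (by finiteness) (by finiteness),
        ENNReal.toReal_add (by finiteness) (by finiteness),
        ENNReal.toReal_add (by finiteness) (by finiteness),
        ENNReal.toReal_ofReal', ENNReal.toReal_ofReal']
      simp only [ENNReal.coe_toReal]
      rcases le_total 0 r with hr | hr
      · rw [max_eq_left hr, max_eq_right (by linarith)]
        constructor <;> intro <;> linarith
      · rw [max_eq_right hr, max_eq_left (by linarith)]
        constructor <;> intro <;> linarith

lemma signedSum_le_of_le_add {m : EReal} {P N : ℝ≥0∞} (hN : N ≠ ⊤) (hm : 0 ≤ m)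
    (h : P ≤ ePos m + N) : signedSum P N ≤ m := by
  rcases eq_or_ne P ⊤ with rfl | hP
  · have : m = ⊤ :=
      EReal.toENNReal_eq_top_iff.1 ((ENNReal.add_eq_top.1 (top_le_iff.1 h)).resolve_right hN)
    simp [this]
  rw [← EReal.coe_toENNReal hm, signedSum, if_neg hP,
    EReal.sub_le_iff_le_add (by simp) (by simp)]
  exact_mod_cast h

lemma le_add_of_signedSum_le {m : EReal} {P N : ℝ≥0∞} (hm : 0 ≤ m)
    (h : signedSum P N ≤ m) : P ≤ ePos m + N := by
  rcases eq_or_ne P ⊤ with rfl | hP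
  · have : m = ⊤ := by simpa [signedSum] using h
    simp [this, ePos]
  rcases eq_or_ne N ⊤ with rfl | hN
  · simp
  rw [← EReal.coe_toENNReal hm, signedSum, if_neg hP,
    EReal.sub_le_iff_le_add (by simp) (by simp)] at h
  exact_mod_cast h

lemma le_signedSum_tsum_mul {ι : Type*} {m : EReal} {w A B : ι → ℝ≥0∞}
    (hw : ∑' i, w i = 1) (hB : ∑' i, w i * B i ≠ ⊤)
    (h : ∀ i, w i ≠ 0 → m ≤ signedSum (A i) (B i)) :
    m ≤ signedSum (∑' i, w i * A i) (∑' i, w i * B i) := by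
  have hw_mul (F : ι → ℝ≥0∞) (c : ℝ≥0∞) : ∑' i, w i * (F i + c) = ∑' i, w i * F i + c := by
    simp only [mul_add, ENNReal.tsum_add, ENNReal.tsum_mul_right, hw, one_mul]
  have hpoint (i : ι) : w i * (B i + ePos m) ≤ w i * (A i + ePos (-m)) := by
    rcases eq_or_ne (w i) 0 with hi | hi
    · simp [hi]
    have hBi : B i ≠ ⊤ := fun hBi =>
      ENNReal.ne_top_of_tsum_ne_top hB i (by rw [hBi, ENNReal.mul_top hi])
    rw [add_comm (B i)]
    exact mul_le_mul_right ((le_signedSum_iff hBi).1 (h i hi)) _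
  rw [le_signedSum_iff hB, add_comm, ← hw_mul, ← hw_mul]
  exact ENNReal.tsum_le_tsum hpoint

lemma _root_.ENNReal.tsum_iSup_of_monotone {α : Type*} {f : ℕ → α → ℝ≥0∞} (hf : Monotone f) :
    ∑' a, ⨆ n, f n a = ⨆ n, ∑' a, f n a := by
  simp only [ENNReal.tsum_eq_iSup_sum]
  rw [iSup_comm]
  exact iSup_congr fun s => ENNReal.finsetSum_iSup_of_monotone fun a _ _ hmn => hf hmn a

lemma _root_.Set.Finite.exists_iSup_le_of_forall_exists_le {ι α : Type*} [CompleteLinearOrder α]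
    {s : Set ι} (hs : s.Finite) {f : ℕ → ι → α} (hf : ∀ i, Monotone (f · i)) {w : ι → α}
    (h : ∀ n, ∃ i ∈ s, f n i ≤ w i) : ∃ i ∈ s, ⨆ n, f n i ≤ w i := by
  by_contra! hlt
  have hev : ∀ i ∈ s, ∀ᶠ n in atTop, w i < f n i := fun i hi => by
    obtain ⟨n, hn⟩ := lt_iSup_iff.1 (hlt i hi)
    exact eventually_atTop.2 ⟨n, fun m hm => hn.trans_le (hf i hm)⟩
  obtain ⟨n, hn⟩ := ((eventually_all_finite hs).2 hev).exists
  obtain ⟨i, hi, hle⟩ := h n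
  exact (hn i hi).not_ge hle

section Trajectories

variable (q : S → C → S → ℝ≥0∞)

def shiftPol (π : Policy S C) (x : S) (u : C) : Policy S C := fun h => π (h ++ [(x, u)])

lemma IsPolicy.shiftPol {U : S → Set C} {π : Policy S C} (hπ : IsPolicy U π) (x : S) (u : C) :
    IsPolicy U (shiftPol π x u) := fun h => hπ (h ++ [(x, u)])

def appendSingletonEquiv (n : ℕ) :
    {l : List (S × C) // l.length = n} × (S × C) ≃ {l : List (S × C) // l.length = n + 1} where
  toFun p := ⟨p.1.1 ++ [p.2], by simp [p.1.2]⟩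
  invFun l := (⟨l.1.dropLast, by simp [l.2]⟩, l.1.getLast (List.ne_nil_of_length_eq_add_one l.2))
  left_inv p := by simp
  right_inv l := Subtype.ext (List.dropLast_append_getLast _)

-- Histories are stored most recent first: the first transition is the last entry of the list.
lemma histProb_append_singleton (π : Policy S C) (x z : S) (u : C) (h : List (S × C)) (y : S) :
    histProb q π x (h ++ [(z, u)]) y =
      if z = x then π [] x u * ∑' x', q x u x' * histProb q (shiftPol π x u) x' h y else 0 := by
  induction h generalizing y with
  | nil =>
    split_ifs with hz
    · subst hz
      rw [tsum_eq_single y fun x' hx' => by simp [histProb, Ne.symm hx']]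
      simp [histProb, mul_comm]
    · simp [histProb, hz]
  | cons p t ih =>
    obtain ⟨w, v⟩ := p
    simp only [List.cons_append, histProb, ih]
    split_ifs with hz
    · subst hz
      simp only [← ENNReal.tsum_mul_right, mul_assoc]
      rfl
    · simp

lemma saDist_zero (π : Policy S C) (x y : S) (u : C) :
    saDist q π x 0 y u = if y = x then π [] x u else 0 := by
  rw [saDist, tsum_eq_single (⟨[], rfl⟩ : {l : List (S × C) // l.length = 0})
    fun l hl => absurd (Subtype.ext (List.length_eq_zero_iff.1 l.2)) hl]
  split_ifs with h <;> simp [histProb, h]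

lemma costAt_zero (π : Policy S C) (x : S) (f : S → C → ℝ≥0∞) :
    costAt q π x 0 f = ∑' u, π [] x u * f x u := by
  rw [costAt, tsum_eq_single x fun y hy => by simp [saDist_zero, hy]]
  simp [saDist_zero]

lemma saDist_succ (π : Policy S C) (x : S) (n : ℕ) (y : S) (v : C) :
    saDist q π x (n + 1) y v =
      ∑' u, π [] x u * ∑' x', q x u x' * saDist q (shiftPol π x u) x' n y v := by
  rw [saDist, ← (appendSingletonEquiv n).tsum_eq, ENNReal.tsum_prod', ENNReal.tsum_comm,
    ENNReal.tsum_prod',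
    tsum_eq_single x fun z hz => by simp [appendSingletonEquiv, histProb_append_singleton, hz]]
  refine tsum_congr fun u => ?_
  simp only [appendSingletonEquiv, Equiv.coe_fn_mk, histProb_append_singleton, if_true, saDist,
    ← ENNReal.tsum_mul_left, ← ENNReal.tsum_mul_right, mul_assoc]
  rw [ENNReal.tsum_comm]
  rfl

lemma costAt_succ (π : Policy S C) (x : S) (n : ℕ) (f : S → C → ℝ≥0∞) :
    costAt q π x (n + 1) f =
      ∑' u, π [] x u * ∑' x', q x u x' * costAt q (shiftPol π x u) x' n f := by
  simp only [costAt, saDist_succ, ← ENNReal.tsum_mul_left, ← ENNReal.tsum_mul_right, mul_assoc]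
  conv_lhs => enter [1, y]; rw [ENNReal.tsum_comm]; enter [1, u]; rw [ENNReal.tsum_comm]
  rw [ENNReal.tsum_comm]
  conv_lhs => enter [1, u]; rw [ENNReal.tsum_comm]

lemma tsum_costAt_eq_step (π : Policy S C) (x : S) (f : S → C → ℝ≥0∞) :
    ∑' n, costAt q π x n f =
      ∑' u, π [] x u * (f x u + ∑' x', q x u x' * ∑' n, costAt q (shiftPol π x u) x' n f) := by
  rw [tsum_eq_zero_add' ENNReal.summable, costAt_zero]
  simp only [costAt_succ, mul_add, ENNReal.tsum_add, ← ENNReal.tsum_mul_left]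
  rw [ENNReal.tsum_comm]
  conv_lhs => enter [2, 1, u]; rw [ENNReal.tsum_comm]

end Trajectories

section ValueIteration

variable {U : S → Set C} {q : S → C → S → ℝ≥0∞} {g : S → C → EReal}

/-- For `J ≥ 0`, `signedSum (qPos q g J x u) (gNeg g x u)` is the Q-factor
`g(x,u) + ∑ J(x') q(x'|x,u)`. -/
def qPos (q : S → C → S → ℝ≥0∞) (g : S → C → EReal) (J : S → EReal) (x : S) (u : C) : ℝ≥0∞ :=
  gPos g x u + ∑' x', q x u x' * ePos (J x')

lemma qPos_mono {J J' : S → EReal} (h : J ≤ J') (x : S) (u : C) :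
    qPos q g J x u ≤ qPos q g J' x u := by
  unfold qPos
  gcongr with x'
  exact ePos_mono (h x')

lemma qPos_iSup {J : ℕ → S → EReal} (hJ : Monotone J) (x : S) (u : C) :
    qPos q g (⨆ n, J n) x u = ⨆ n, qPos q g (J n) x u := by
  simp only [qPos, iSup_apply, ePos_iSup, ENNReal.mul_iSup]
  rw [ENNReal.tsum_iSup_of_monotone (f := fun n x' => q x u x' * ePos (J n x'))
    fun m n hmn x' => mul_le_mul_right (ePos_mono (hJ hmn x')) _, ENNReal.add_iSup]

lemma Top_eq_of_nonneg {J : S → EReal} (hJ : ∀ x, 0 ≤ J x) (x : S) :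
    Top U q g J x = ⨅ u ∈ U x, signedSum (qPos q g J x u) (gNeg g x u) := by
  simp only [Top, opT, ePos_neg_of_nonneg (hJ _), mul_zero, tsum_zero, add_zero]
  rfl

lemma monotone_Top : Monotone (Top U q g) := fun _ _ h _ =>
  iInf₂_mono fun _ _ => signedSum_mono
    (add_le_add_right (ENNReal.tsum_le_tsum fun x' => mul_le_mul_right (ePos_mono (h x')) _) _)
    (add_le_add_right (ENNReal.tsum_le_tsum fun x' =>
      mul_le_mul_right (ePos_mono (EReal.neg_le_neg_iff.2 (h x'))) _) _)

lemma le_Ttil (J : S → EReal) : J ≤ Ttil U q g J := fun _ => le_max_left _ _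

lemma Top_le_Ttil (J : S → EReal) : Top U q g J ≤ Ttil U q g J := fun _ => le_max_right _ _

lemma iterate_Ttil_le {J W : S → EReal} (hJ : J ≤ W) (hW : Top U q g W ≤ W) (n : ℕ) :
    (Ttil U q g)^[n] J ≤ W := by
  induction n with
  | zero => exact hJ
  | succ n ih =>
    rw [Function.iterate_succ_apply']
    exact fun x => max_le (ih x) ((monotone_Top ih x).trans (hW x))

lemma GC.Jminus_ne_top (hGC : GC U q g) {π : Policy S C} (hπ : IsPolicy U π) (x : S) :
    Jminus q g π x ≠ ⊤ :=
  ne_top_of_le_ne_top (hGC x)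
    (le_iSup₂ (f := fun π (_ : π ∈ {π' | IsPolicy U π'}) => Jminus q g π x) π hπ)

lemma Jstar_le_Jpol {π : Policy S C} (hπ : IsPolicy U π) (x : S) :
    Jstar U q g x ≤ Jpol q g π x :=
  iInf₂_le π hπ

lemma ePos_Jstar_add_Jminus_le (hGC : GC U q g) (hpos : ∀ x, 0 ≤ Jstar U q g x)
    {π : Policy S C} (hπ : IsPolicy U π) (x : S) :
    ePos (Jstar U q g x) + Jminus q g π x ≤ Jplus q g π x := by
  simpa [ePos_neg_of_nonneg (hpos x)] using
    (le_signedSum_iff (hGC.Jminus_ne_top hπ x)).1 (Jstar_le_Jpol hπ x)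

theorem Top_Jstar_le (hGC : GC U q g) (hpos : ∀ x, 0 ≤ Jstar U q g x) :
    Top U q g (Jstar U q g) ≤ Jstar U q g := by
  intro x
  refine le_iInf₂ fun π (hπ : IsPolicy U π) => ?_
  set A : C → ℝ≥0∞ := fun u => gPos g x u + ∑' x', q x u x' * Jplus q g (shiftPol π x u) x'
  set c : C → ℝ≥0∞ := fun u => ∑' x', q x u x' * Jminus q g (shiftPol π x u) x'
  have hminus : Jminus q g π x = ∑' u, π [] x u * (gNeg g x u + c u) :=
    tsum_costAt_eq_step q π x _
  have hJpol : Jpol q g π x =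
      signedSum (∑' u, π [] x u * A u) (∑' u, π [] x u * (gNeg g x u + c u)) := by
    rw [Jpol, ← hminus, Jplus, tsum_costAt_eq_step]
    rfl
  rw [hJpol]
  refine le_signedSum_tsum_mul (hπ [] x).1 (hminus ▸ hGC.Jminus_ne_top hπ x) fun u hu => ?_
  have hB : gNeg g x u + c u ≠ ⊤ := fun h => hGC.Jminus_ne_top hπ x
    (hminus ▸ ENNReal.tsum_eq_top_of_eq_top ⟨u, by rw [h, ENNReal.mul_top hu]⟩)
  have hTop : Top U q g (Jstar U q g) x ≤ signedSum (qPos q g (Jstar U q g) x u) (gNeg g x u) := by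
    rw [Top_eq_of_nonneg hpos]
    exact iInf₂_le u ((hπ [] x).2 u hu)
  have hqc : qPos q g (Jstar U q g) x u + c u ≤ A u := by
    simp only [qPos, A, c, add_assoc, ← ENNReal.tsum_add, ← mul_add]
    gcongr with x'
    exact ePos_Jstar_add_Jminus_le hGC hpos (hπ.shiftPol x u) x'
  rw [le_signedSum_iff hB, ← add_assoc]
  calc _ ≤ qPos q g (Jstar U q g) x u + ePos (-Top U q g (Jstar U q g) x) + c u := by
        gcongr ?_ + _
        exact (le_signedSum_iff (ENNReal.add_ne_top.1 hB).1).1 hTop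
    _ ≤ A u + ePos (-Top U q g (Jstar U q g) x) := by
        rw [add_right_comm]
        gcongr

def detPolicy (σ : S → C) : Policy S C := toPolicy fun x u => if u = σ x then 1 else 0

lemma tsum_detPolicy_mul (σ : S → C) (h : List (S × C)) (x : S) (F : C → ℝ≥0∞) :
    ∑' u, detPolicy σ h x u * F u = F (σ x) := by
  rw [tsum_eq_single (σ x) fun u hu => by simp [detPolicy, toPolicy, hu]]
  simp [detPolicy, toPolicy]

lemma isPolicy_detPolicy {σ : S → C} (hσ : ∀ x, σ x ∈ U x) : IsPolicy U (detPolicy σ) := by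
  refine fun h x => ⟨by simpa using tsum_detPolicy_mul σ h x 1, fun u hu => ?_⟩
  by_cases hu' : u = σ x
  · exact hu' ▸ hσ x
  · simp [detPolicy, toPolicy, hu'] at hu

lemma sum_range_succ_costAt_detPolicy (σ : S → C) (f : S → C → ℝ≥0∞) (n : ℕ) (x : S) :
    ∑ k ∈ Finset.range (n + 1), costAt q (detPolicy σ) x k f =
      f x (σ x) + ∑' x', q x (σ x) x' * ∑ k ∈ Finset.range n, costAt q (detPolicy σ) x' k f := by
  simp only [Finset.sum_range_succ', costAt_succ, costAt_zero, tsum_detPolicy_mul, Finset.mul_sum]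
  rw [add_comm, ← Summable.tsum_finsetSum fun _ _ => ENNReal.summable]
  rfl

lemma Jpol_detPolicy_le (hGC : GC U q g) {σ : S → C} (hσ : ∀ x, σ x ∈ U x) {V : S → EReal}
    (hV : ∀ x, 0 ≤ V x) (hσV : ∀ x, qPos q g V x (σ x) ≤ ePos (V x) + gNeg g x (σ x)) (x : S) :
    Jpol q g (detPolicy σ) x ≤ V x := by
  set P : ℕ → S → ℝ≥0∞ := fun n x => ∑ k ∈ Finset.range n, costAt q (detPolicy σ) x k (gPos g)
  set N : ℕ → S → ℝ≥0∞ := fun n x => ∑ k ∈ Finset.range n, costAt q (detPolicy σ) x k (gNeg g)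
  have hPN (n : ℕ) : ∀ x, P n x ≤ ePos (V x) + N n x := by
    induction n with
    | zero => simp [P]
    | succ n ih =>
      intro x
      calc P (n + 1) x = gPos g x (σ x) + ∑' x', q x (σ x) x' * P n x' :=
            sum_range_succ_costAt_detPolicy σ _ n x
        _ ≤ gPos g x (σ x) + ∑' x', q x (σ x) x' * (ePos (V x') + N n x') := by
            gcongr with x'
            exact ih x'
        _ = qPos q g V x (σ x) + ∑' x', q x (σ x) x' * N n x' := by
            simp only [qPos, mul_add, ENNReal.tsum_add, add_assoc]
        _ ≤ ePos (V x) + gNeg g x (σ x) + ∑' x', q x (σ x) x' * N n x' := by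
            gcongr
            exact hσV x
        _ = ePos (V x) + N (n + 1) x := by
            rw [add_assoc]
            exact congrArg _ (sum_range_succ_costAt_detPolicy σ _ n x).symm
  refine signedSum_le_of_le_add (hGC.Jminus_ne_top (isPolicy_detPolicy hσ) x) (hV x) ?_
  rw [Jplus, ENNReal.tsum_eq_iSup_nat]
  exact iSup_le fun n => (hPN n x).trans (add_le_add_right (ENNReal.sum_le_tsum _) _)

theorem Jstar_le_iSup_iterate_Ttil (hU : ∀ x, (U x).Nonempty) (hUfin : ∀ x, (U x).Finite)
    (hGC : GC U q g) : Jstar U q g ≤ ⨆ n, (Ttil U q g)^[n] 0 := by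
  set V : ℕ → S → EReal := fun n => (Ttil U q g)^[n] 0
  have hV_mono : Monotone V := fun m n hmn =>
    Function.monotone_iterate_of_id_le le_Ttil hmn 0
  have hV_nonneg (n : ℕ) (x : S) : 0 ≤ V n x := hV_mono (Nat.zero_le n) x
  have hW_nonneg (x : S) : 0 ≤ (⨆ n, V n) x := (hV_nonneg 0 x).trans (le_iSup V 0 x)
  have hsel (x : S) : ∃ u ∈ U x, qPos q g (⨆ n, V n) x u ≤ ePos ((⨆ n, V n) x) + gNeg g x u := by
    simp only [qPos_iSup hV_mono]
    refine (hUfin x).exists_iSup_le_of_forall_exists_le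
      (fun u _ _ hmn => qPos_mono (hV_mono hmn) x u) fun n => ?_
    obtain ⟨u, hu, hmin⟩ := Set.exists_min_image _
      (fun u => signedSum (qPos q g (V n) x u) (gNeg g x u)) (hUfin x) (hU x)
    refine ⟨u, hu, le_add_of_signedSum_le (hW_nonneg x) ?_⟩
    calc signedSum (qPos q g (V n) x u) (gNeg g x u) ≤ Top U q g (V n) x := by
          rw [Top_eq_of_nonneg (hV_nonneg n)]
          exact le_iInf₂ hmin
      _ ≤ V (n + 1) x := by
          simp only [V, Function.iterate_succ_apply']
          exact Top_le_Ttil _ x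
      _ ≤ (⨆ n, V n) x := le_iSup V (n + 1) x
  choose σ hσU hσ using hsel
  exact fun x => (Jstar_le_Jpol (isPolicy_detPolicy hσU) x).trans
    (Jpol_detPolicy_le hGC hσU hW_nonneg hσ x)

end ValueIteration

theorem value_iteration_finite_controls_general {S C : Type}
    (U : S → Set C) (q : S → C → S → ℝ≥0∞) (g : S → C → EReal)
    (hU : ∀ x, (U x).Nonempty)
    (hGC : GC U q g)
    (hUfin : ∀ x : S, (U x).Finite)
    (hpos : ∀ x : S, 0 ≤ Jstar U q g x) :
    ∀ x : S, Filter.Tendsto (fun n : ℕ => (Ttil U q g)^[n] (fun _ => 0) x)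
      Filter.atTop (nhds (Jstar U q g x)) := by
  have hmono : Monotone fun n => (Ttil U q g)^[n] 0 := fun m n hmn =>
    Function.monotone_iterate_of_id_le le_Ttil hmn 0
  have hsup : ⨆ n, (Ttil U q g)^[n] 0 = Jstar U q g :=
    le_antisymm (iSup_le (iterate_Ttil_le hpos (Top_Jstar_le hGC hpos)))
      (Jstar_le_iSup_iterate_Ttil hU hUfin hGC)
  intro x
  rw [← hsup, iSup_apply]
  exact tendsto_atTop_iSup fun m n hmn => hmono hmn x

/-- if every control set `U(x)` is finite and `J* ≥ 0`, then
`T̃ⁿ(0) → J*` pointwise. -/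
theorem value_iteration_finite_controls {S C : Type} [Countable S] [Countable C]
    (U : S → Set C) (q : S → C → S → ℝ≥0∞) (g : S → C → EReal)
    (hU : ∀ x, (U x).Nonempty)
    (hg : ∀ x, ∀ u ∈ U x, g x u ≠ ⊥)
    (hq : ∀ x, ∀ u ∈ U x, (∑' x' : S, q x u x') = 1)
    (hGC : GC U q g)
    (hUfin : ∀ x : S, (U x).Finite)
    (hpos : ∀ x : S, 0 ≤ Jstar U q g x) :
    ∀ x : S, Filter.Tendsto (fun n : ℕ => (Ttil U q g)^[n] (fun _ => 0) x)
      Filter.atTop (nhds (Jstar U q g x)) :=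
  value_iteration_finite_controls_general U q g hU hGC hUfin hpos

end GCMDP

end
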